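/- Let {q_n} be the Fibonacci Quilt sequence and let λ₁ be the unique real root of x³ − x − 1 = 0 (λ₁ ≈ 1.32472). Then there exists a constant α₁ > 0 (α₁ ≈ 1.26724) such that q_n / λ₁^n converges to α₁ as n → ∞. -/

import Mathlib

/-!
Let `quilt` be `0, 1, 2, 3, 4` followed by `quilt (n + 5) = quilt (n + 3) + quilt (n + 2)`.
Greedily splitting off `quilt n` shows that every `m < quilt (n + 1)` is an FQ-legal sum of
`quilt 1, …, quilt n`, and an induction on the largest index of a legal set shows that such a sum
is never `quilt (n + 1)` nor `quilt (n + 2)`. So the minimality condition defining `q` forces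
`q = quilt` on positive indices.

From index `2` on, `quilt` satisfies `a (n + 3) = a (n + 1) + a n`. For the real root `ρ` of
`X ^ 3 - X - 1`, the quantity `ρ a (n + 2) + ρ ^ 2 a (n + 1) + a n` gets multiplied by `ρ` at each
step, which identifies the limit `α` of `a n / ρ ^ n`. The error `a n / ρ ^ n - α` then satisfies
`x (n + 2) + x (n + 1) + ρ⁻³ x n = 0`, whose characteristic roots are complex of modulus
`ρ ^ (-3/2) < 1`.
-/

open scoped BigOperators

/-- A finite set of indices is FQ-legal: distinct indices never differ by 1, 3 or 4,
and the set does not contain both 1 and 3. -/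
def FQLegal (L : Finset ℕ) : Prop :=
  (∀ i ∈ L, ∀ j ∈ L, i ≠ j →
    max i j - min i j ≠ 1 ∧ max i j - min i j ≠ 3 ∧ max i j - min i j ≠ 4) ∧
  ¬ (1 ∈ L ∧ 3 ∈ L)

/-- `m` has an FQ-legal decomposition using only `q_1, …, q_{i-1}`. -/
def FQRepr (q : ℕ → ℕ) (i m : ℕ) : Prop :=
  ∃ L : Finset ℕ, (∀ j ∈ L, 1 ≤ j ∧ j < i) ∧ FQLegal L ∧ (∑ j ∈ L, q j) = m

/-- `q` (1-indexed) is the Fibonacci Quilt sequence: `q 1 = 1` and for `i ≥ 2`,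
`q i` is the smallest positive integer having no FQ-legal decomposition using
`{q_1, …, q_{i-1}}`. -/
def IsFQSeq (q : ℕ → ℕ) : Prop :=
  q 1 = 1 ∧ ∀ i, 2 ≤ i → IsLeast {m : ℕ | 0 < m ∧ ¬ FQRepr q i m} (q i)

open Finset Filter Topology

instance : DecidablePred FQLegal := fun L => by unfold FQLegal; infer_instance

def quilt : ℕ → ℕ
  | 0 => 0 | 1 => 1 | 2 => 2 | 3 => 3 | 4 => 4
  | n + 5 => quilt (n + 3) + quilt (n + 2)

theorem quilt_add_five (n : ℕ) : quilt (n + 5) = quilt (n + 3) + quilt (n + 2) := rfl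

theorem quilt_add_seven (n : ℕ) : quilt (n + 7) = quilt (n + 6) + quilt (n + 2) := by
  have h7 : quilt (n + 7) = quilt (n + 5) + quilt (n + 4) := quilt_add_five (n + 2)
  have h6 : quilt (n + 6) = quilt (n + 4) + quilt (n + 3) := quilt_add_five (n + 1)
  have h5 := quilt_add_five n
  omega

theorem quilt_strictMono : StrictMono quilt := by
  refine strictMono_nat_of_lt_succ fun n => ?_
  induction n using Nat.strong_induction_on with
  | _ n ih =>
    match n with
    | 0 | 1 | 2 | 3 | 4 => decide
    | n + 5 =>
      have h3 : quilt (n + 3) < quilt (n + 4) := ih (n + 3) (by omega)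
      have h2 : quilt (n + 2) < quilt (n + 3) := ih (n + 2) (by omega)
      have h6 : quilt (n + 6) = quilt (n + 4) + quilt (n + 3) := quilt_add_five (n + 1)
      have h5 := quilt_add_five n
      show quilt (n + 5) < quilt (n + 6)
      omega

theorem quilt_pos {n : ℕ} (hn : 1 ≤ n) : 0 < quilt n :=
  quilt_strictMono hn

namespace FQLegal

variable {L : Finset ℕ}

theorem mono {L' : Finset ℕ} (hL : FQLegal L) (h : L' ⊆ L) : FQLegal L' :=
  ⟨fun i hi j hj hij => hL.1 i (h hi) j (h hj) hij, fun ⟨h1, h3⟩ => hL.2 ⟨h h1, h h3⟩⟩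

theorem sub_ne (hL : FQLegal L) {a b : ℕ} (ha : a ∈ L) (hb : b ∈ L) (hab : b < a) :
    a - b ≠ 1 ∧ a - b ≠ 3 ∧ a - b ≠ 4 := by
  simpa [max_eq_left hab.le, min_eq_right hab.le] using hL.1 a ha b hb hab.ne'

theorem insert_of_add_five_le (hL : FQLegal L) {n : ℕ} (hn : ∀ j ∈ L, j + 5 ≤ n) :
    FQLegal (insert n L) := by
  refine ⟨fun i hi j hj hij => ?_, fun ⟨h1, h3⟩ => ?_⟩
  · rcases mem_insert.1 hi with hi | hi <;> rcases mem_insert.1 hj with hj | hj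
    · exact absurd (hi.trans hj.symm) hij
    · have := hn j hj; omega
    · have := hn i hi; omega
    · exact hL.1 i hi j hj hij
  · rcases mem_insert.1 h1 with h1 | h1 <;> rcases mem_insert.1 h3 with h3 | h3
    · omega
    · have := hn 3 h3; omega
    · have := hn 1 h1; omega
    · exact hL.2 ⟨h1, h3⟩

-- Split off the largest index `n + 7`, and then `n + 5` if present: the forbidden gaps
-- push every remaining index far below.
theorem sum_trichotomy {M : Type*} [AddCommMonoid M] (hL : FQLegal L) {n : ℕ}
    (hsub : L ⊆ Icc 1 (n + 7)) (f : ℕ → M) :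
    L ⊆ Icc 1 (n + 6) ∨
    (∃ L' ⊆ Icc 1 n, FQLegal L' ∧ ∑ j ∈ L, f j = f (n + 7) + f (n + 5) + ∑ j ∈ L', f j) ∨
    (∃ L' ⊆ Icc 1 (n + 2), FQLegal L' ∧ ∑ j ∈ L, f j = f (n + 7) + ∑ j ∈ L', f j) := by
  by_cases h7 : n + 7 ∈ L
  swap
  · left
    intro j hj
    have := mem_Icc.1 (hsub hj)
    have : j ≠ n + 7 := fun h => h7 (h ▸ hj)
    exact mem_Icc.2 ⟨by omega, by omega⟩
  right
  have hbelow (j : ℕ) (hj : j ∈ L.erase (n + 7)) :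
      j ∈ L ∧ 1 ≤ j ∧ j ≤ n + 5 ∧ j ≠ n + 4 ∧ j ≠ n + 3 := by
    obtain ⟨hj7, hjL⟩ := mem_erase.1 hj
    have := mem_Icc.1 (hsub hjL)
    have := hL.sub_ne h7 hjL (by omega)
    exact ⟨hjL, by omega⟩
  by_cases h5 : n + 5 ∈ L
  · left
    have h5' : n + 5 ∈ L.erase (n + 7) := mem_erase.2 ⟨by omega, h5⟩
    refine ⟨(L.erase (n + 7)).erase (n + 5), fun j hj => ?_,
      hL.mono ((erase_subset _ _).trans (erase_subset _ _)), ?_⟩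
    · obtain ⟨hj5, hj⟩ := mem_erase.1 hj
      obtain ⟨hjL, hj1, hjn, hj4, hj3⟩ := hbelow j hj
      have := hL.sub_ne h5 hjL (by omega)
      exact mem_Icc.2 ⟨hj1, by omega⟩
    · rw [← add_sum_erase _ _ h7, ← add_sum_erase _ _ h5', add_assoc]
  · right
    refine ⟨L.erase (n + 7), fun j hj => ?_, hL.mono (erase_subset _ _),
      (add_sum_erase _ _ h7).symm⟩
    obtain ⟨hjL, hj1, hjn, hj4, hj3⟩ := hbelow j hj
    have : j ≠ n + 5 := fun h => h5 (h ▸ hjL)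
    exact mem_Icc.2 ⟨hj1, by omega⟩

end FQLegal

theorem sum_quilt_lt {k : ℕ} {L : Finset ℕ} (hL : FQLegal L) (hsub : L ⊆ Icc 1 k) :
    ∑ j ∈ L, quilt j < quilt (k + 3) := by
  induction k using Nat.strong_induction_on generalizing L with
  | _ k ih =>
    rcases Nat.lt_or_ge k 7 with hk | hk
    · have hsmall : ∀ k < 7, ∀ L ∈ (Icc 1 k).powerset, FQLegal L →
          ∑ j ∈ L, quilt j < quilt (k + 3) := by decide +kernel
      exact hsmall k hk L (mem_powerset.2 hsub) hL
    obtain ⟨n, rfl⟩ : ∃ n, k = n + 7 := ⟨k - 7, by omega⟩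
    have h10 : quilt (n + 10) = quilt (n + 8) + quilt (n + 7) := quilt_add_five (n + 5)
    have h8 : quilt (n + 8) = quilt (n + 6) + quilt (n + 5) := quilt_add_five (n + 3)
    show ∑ j ∈ L, quilt j < quilt (n + 10)
    rcases hL.sum_trichotomy hsub quilt with
      hsub' | ⟨L', hsub', hL', hsum⟩ | ⟨L', hsub', hL', hsum⟩
    · have : ∑ j ∈ L, quilt j < quilt (n + 9) := ih (n + 6) (by omega) hL hsub'
      have := quilt_strictMono (show n + 9 < n + 10 by omega)
      omega
    · have : ∑ j ∈ L', quilt j < quilt (n + 3) := ih n (by omega) hL' hsub'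
      have := quilt_strictMono (show n + 3 < n + 6 by omega)
      omega
    · have : ∑ j ∈ L', quilt j < quilt (n + 5) := ih (n + 2) (by omega) hL' hsub'
      have := quilt_strictMono (show n + 5 < n + 8 by omega)
      omega

theorem sum_quilt_ne {k : ℕ} {L : Finset ℕ} (hL : FQLegal L) (hsub : L ⊆ Icc 1 k) :
    ∑ j ∈ L, quilt j ≠ quilt (k + 1) ∧ ∑ j ∈ L, quilt j ≠ quilt (k + 2) := by
  induction k using Nat.strong_induction_on generalizing L with
  | _ k ih =>
    rcases Nat.lt_or_ge k 8 with hk | hk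
    · have hsmall : ∀ k < 8, ∀ L ∈ (Icc 1 k).powerset, FQLegal L →
          ∑ j ∈ L, quilt j ≠ quilt (k + 1) ∧ ∑ j ∈ L, quilt j ≠ quilt (k + 2) := by
        decide +kernel
      exact hsmall k hk L (mem_powerset.2 hsub) hL
    obtain ⟨n, rfl⟩ : ∃ n, k = n + 7 := ⟨k - 7, by omega⟩
    have h9 : quilt (n + 9) = quilt (n + 7) + quilt (n + 6) := quilt_add_five (n + 4)
    have h8 : quilt (n + 8) = quilt (n + 6) + quilt (n + 5) := quilt_add_five (n + 3)
    show ∑ j ∈ L, quilt j ≠ quilt (n + 8) ∧ ∑ j ∈ L, quilt j ≠ quilt (n + 9)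
    rcases hL.sum_trichotomy hsub quilt with
      hsub' | ⟨L', hsub', hL', hsum⟩ | ⟨L', hsub', hL', hsum⟩
    · have : ∑ j ∈ L, quilt j < quilt (n + 9) := sum_quilt_lt hL hsub'
      exact ⟨(ih (n + 6) (by omega) hL hsub').2, this.ne⟩
    · have h6 : quilt (n + 6) = quilt (n + 5) + quilt (n + 1) := by
        obtain ⟨m, rfl⟩ : ∃ m, n = m + 1 := ⟨n - 1, by omega⟩
        exact quilt_add_seven m
      have := quilt_strictMono (show n + 6 < n + 7 by omega)
      have := (ih n (by omega) hL' hsub').1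
      omega
    · have h8' : quilt (n + 8) = quilt (n + 7) + quilt (n + 3) := quilt_add_seven (n + 1)
      have : ∑ j ∈ L', quilt j < quilt (n + 5) := sum_quilt_lt hL' hsub'
      have := quilt_strictMono (show n + 5 < n + 6 by omega)
      have : ∑ j ∈ L', quilt j ≠ quilt (n + 3) := (ih (n + 2) (by omega) hL' hsub').1
      omega

theorem exists_sum_quilt_eq {n m : ℕ} (hm : m < quilt (n + 1)) :
    ∃ L ⊆ Icc 1 n, FQLegal L ∧ ∑ j ∈ L, quilt j = m := by
  induction n using Nat.strong_induction_on generalizing m with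
  | _ n ih =>
    rcases Nat.lt_or_ge n 6 with hn | hn
    · have hsmall : ∀ n < 6, ∀ m < quilt (n + 1), ∃ L ∈ (Icc 1 n).powerset,
          FQLegal L ∧ ∑ j ∈ L, quilt j = m := by
        decide +kernel
      obtain ⟨L, hL, h⟩ := hsmall n hn m hm
      exact ⟨L, mem_powerset.1 hL, h⟩
    obtain ⟨t, rfl⟩ : ∃ t, n = t + 6 := ⟨n - 6, by omega⟩
    replace hm : m < quilt (t + 6) + quilt (t + 2) := quilt_add_seven t ▸ hm
    rcases Nat.lt_or_ge m (quilt (t + 6)) with hlt | hge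
    · obtain ⟨L, hsub, hL, hsum⟩ := ih (t + 5) (by omega) hlt
      exact ⟨L, hsub.trans (Icc_subset_Icc_right (by omega)), hL, hsum⟩
    -- greedy step: take `quilt (t + 6)` and represent the remainder below `quilt (t + 2)`
    obtain ⟨L, hsub, hL, hsum⟩ := ih (t + 1) (by omega)
      (show m - quilt (t + 6) < quilt (t + 2) by omega)
    have hbound (j : ℕ) (hj : j ∈ L) : j + 5 ≤ t + 6 := by
      have := mem_Icc.1 (hsub hj); omega
    have hnot : t + 6 ∉ L := fun h => by have := hbound _ h; omega
    refine ⟨insert (t + 6) L, insert_subset (mem_Icc.2 ⟨by omega, le_rfl⟩)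
      (hsub.trans (Icc_subset_Icc_right (by omega))), hL.insert_of_add_five_le hbound, ?_⟩
    rw [sum_insert hnot, hsum]
    omega

theorem fqRepr_succ_iff {q q' : ℕ → ℕ} {n m : ℕ} (h : ∀ j ∈ Icc 1 n, q j = q' j) :
    FQRepr q (n + 1) m ↔ ∃ L ⊆ Icc 1 n, FQLegal L ∧ ∑ j ∈ L, q' j = m := by
  have hmem {L : Finset ℕ} : (∀ j ∈ L, 1 ≤ j ∧ j < n + 1) ↔ L ⊆ Icc 1 n := by
    simp only [subset_iff, mem_Icc, Nat.lt_succ_iff]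
  refine exists_congr fun L => ?_
  rw [hmem]
  refine and_congr_right fun hsub => and_congr_right fun _ => ?_
  rw [sum_congr rfl fun j hj => h j (hsub hj)]

theorem isLeast_quilt {q : ℕ → ℕ} {n : ℕ} (h : ∀ j ∈ Icc 1 (n + 1), q j = quilt j) :
    IsLeast {m : ℕ | 0 < m ∧ ¬ FQRepr q (n + 2) m} (quilt (n + 2)) := by
  simp only [IsLeast, lowerBounds, Set.mem_ofPred_eq, fqRepr_succ_iff h, not_exists, not_and]
  refine ⟨⟨quilt_pos (by omega), fun L hsub hL => (sum_quilt_ne hL hsub).1⟩,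
    fun m ⟨hm, hrepr⟩ => ?_⟩
  by_contra! hlt
  obtain ⟨L, hsub, hL, hsum⟩ := exists_sum_quilt_eq hlt
  exact hrepr L hsub hL hsum

theorem IsFQSeq.eq_quilt {q : ℕ → ℕ} (hq : IsFQSeq q) {n : ℕ} (hn : 1 ≤ n) : q n = quilt n := by
  induction n using Nat.strong_induction_on with
  | _ n ih =>
    obtain rfl | ⟨k, rfl⟩ : n = 1 ∨ ∃ k, n = k + 2 := by
      rcases n with _ | _ | k <;> simp_all
    · exact hq.1
    · exact (hq.2 (k + 2) (by omega)).unique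
        (isLeast_quilt fun j hj => ih j (Nat.lt_succ_of_le (mem_Icc.1 hj).2) (mem_Icc.1 hj).1)

theorem tendsto_nhds_zero_of_add_add_mul_eq_zero {c : ℝ} (hc : 1 / 4 < c) (hc1 : c < 1)
    {x : ℕ → ℝ} (hx : ∀ n, x (n + 2) + x (n + 1) + c * x n = 0) :
    Tendsto x atTop (𝓝 0) := by
  -- the roots of `X ^ 2 + X + c` are complex conjugates of modulus `√c`,
  -- and this positive definite form is scaled by exactly `c` at each step
  set E : ℕ → ℝ := fun n => x (n + 1) ^ 2 + x (n + 1) * x n + c * x n ^ 2 with hE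
  have hE_succ (n : ℕ) : E (n + 1) = c * E n := by
    have hx2 : x (n + 2) = -x (n + 1) - c * x n := by linear_combination hx n
    simp only [hE, hx2]
    ring
  have hE_pow (n : ℕ) : E n = E 0 * c ^ n := by
    induction n with
    | zero => simp
    | succ n ih => rw [hE_succ, ih, pow_succ]; ring
  have hsq (n : ℕ) : x n ^ 2 ≤ E 0 / (c - 1 / 4) * c ^ n := by
    rw [div_mul_eq_mul_div, le_div_iff₀ (by linarith), ← hE_pow]
    nlinarith [sq_nonneg (x (n + 1) + x n / 2)]
  have hsq_lim : Tendsto (fun n => x n ^ 2) atTop (𝓝 0) := by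
    refine squeeze_zero (fun n => sq_nonneg _) hsq ?_
    simpa using (tendsto_pow_atTop_nhds_zero_of_lt_one (by linarith) hc1).const_mul
      (E 0 / (c - 1 / 4))
  rw [tendsto_zero_iff_abs_tendsto_zero]
  simpa [Function.comp_def, Real.sqrt_sq_eq_abs] using hsq_lim.sqrt

theorem linearCombination_eq_pow_mul_of_recurrence {ρ : ℝ} (hρ : ρ ^ 3 = ρ + 1) {a : ℕ → ℝ}
    (ha : ∀ n, a (n + 3) = a (n + 1) + a n) (n : ℕ) :
    ρ * a (n + 2) + ρ ^ 2 * a (n + 1) + a n = ρ ^ n * (ρ * a 2 + ρ ^ 2 * a 1 + a 0) := by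
  induction n with
  | zero => simp
  | succ n ih =>
    rw [pow_succ]
    linear_combination ρ * ih + ρ * ha n - a (n + 1) * hρ

theorem pos_of_pow_three_eq {ρ : ℝ} (hρ : ρ ^ 3 = ρ + 1) : 0 < ρ := by
  nlinarith [sq_nonneg ρ, sq_nonneg (ρ + 1)]

theorem tendsto_div_pow_of_recurrence {ρ : ℝ} (hρ : ρ ^ 3 = ρ + 1) {a : ℕ → ℝ}
    (ha : ∀ n, a (n + 3) = a (n + 1) + a n) :
    Tendsto (fun n => a n / ρ ^ n) atTop
      (𝓝 ((ρ ^ 2 * a 1 + ρ * a 2 + a 0) / (2 * ρ + 3))) := by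
  have hρ0 := pos_of_pow_three_eq hρ
  have hρ3 : ρ < 3 := by nlinarith [sq_nonneg ρ]
  generalize hα : (ρ ^ 2 * a 1 + ρ * a 2 + a 0) / (2 * ρ + 3) = α
  have hαS : α * (2 * ρ + 3) = ρ ^ 2 * a 1 + ρ * a 2 + a 0 := by
    rw [← hα]; field_simp
  rw [← tendsto_sub_nhds_zero_iff]
  refine tendsto_nhds_zero_of_add_add_mul_eq_zero (c := (ρ ^ 3)⁻¹) ?_ ?_ fun n => ?_
  · rw [hρ, lt_inv_comm₀ (by norm_num) (by linarith)]; linarith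
  · rw [hρ]; exact inv_lt_one_of_one_lt₀ (by linarith)
  · have hS := linearCombination_eq_pow_mul_of_recurrence hρ ha n
    simp only [pow_add, pow_one]
    field_simp
    linear_combination hS - ρ ^ n * hαS - 2 * α * ρ ^ n * hρ

theorem tendsto_quilt_div_pow {ρ : ℝ} (hρ : ρ ^ 3 = ρ + 1) :
    Tendsto (fun n => (quilt n : ℝ) / ρ ^ n) atTop
      (𝓝 ((3 * ρ ^ 2 + 4 * ρ + 2) / (2 * ρ + 3) / ρ ^ 2)) := by
  have h := tendsto_div_pow_of_recurrence hρ (a := fun n => (quilt (n + 2) : ℝ))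
    fun n => by simp only [quilt_add_five n, Nat.cast_add]
  rw [← tendsto_add_atTop_iff_nat 2]
  convert h.div_const (ρ ^ 2) using 2 with n
  · rw [pow_add, div_div]
  · norm_num [quilt]
    ring

theorem stmt_4_general (q : ℕ → ℕ) (hq : IsFQSeq q) (lam1 : ℝ)
    (hroot : lam1 ^ 3 - lam1 - 1 = 0) :
    ∃ α1 : ℝ, 0 < α1 ∧
      Filter.Tendsto (fun n : ℕ => (q n : ℝ) / lam1 ^ n) Filter.atTop (nhds α1) := by
  have hcube : lam1 ^ 3 = lam1 + 1 := by linear_combination hroot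
  have hpos := pos_of_pow_three_eq hcube
  refine ⟨_, by positivity, (tendsto_quilt_div_pow hcube).congr' ?_⟩
  filter_upwards [eventually_ge_atTop 1] with n hn
  rw [hq.eq_quilt hn]

theorem stmt_4 (q : ℕ → ℕ) (hq : IsFQSeq q) (lam1 : ℝ)
    (hroot : lam1 ^ 3 - lam1 - 1 = 0)
    (huniq : ∀ x : ℝ, x ^ 3 - x - 1 = 0 → x = lam1) :
    ∃ α1 : ℝ, 0 < α1 ∧
      Filter.Tendsto (fun n : ℕ => (q n : ℝ) / lam1 ^ n) Filter.atTop (nhds α1) :=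
  stmt_4_general q hq lam1 hroot
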